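/- arXiv:1811.00547 — 3 statements merged into one kernel-verified Lean document; each statement's English description precedes it below -/
import Mathlib

section
/- For positive definite matrices A and B and t in [0,1], (A #_t B)^{-1} = A^{-1} #_t B^{-1}. -/
open Matrix
open scoped ComplexOrder

/-- Real power of a Hermitian matrix via its spectral decomposition
(junk value for non-Hermitian input). -/
noncomputable def mrpow {m : ℕ} (A : Matrix (Fin m) (Fin m) ℂ) (t : ℝ) : Matrix (Fin m) (Fin m) ℂ :=
  if h : A.IsHermitian then
    (h.eigenvectorUnitary : Matrix (Fin m) (Fin m) ℂ) *
      Matrix.diagonal (fun i => ((h.eigenvalues i ^ t : ℝ) : ℂ)) *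
      star (h.eigenvectorUnitary : Matrix (Fin m) (Fin m) ℂ)
  else A

/-- Weighted geometric mean  A #_t B = A^{1/2} (A^{-1/2} B A^{-1/2})^t A^{1/2}. -/
noncomputable def geomMean {m : ℕ} (t : ℝ) (A B : Matrix (Fin m) (Fin m) ℂ) :
    Matrix (Fin m) (Fin m) ℂ :=
  mrpow A (1/2) * mrpow (mrpow A (-(1/2)) * B * mrpow A (-(1/2))) t * mrpow A (1/2)

/-!
For positive definite `A`, `mrpow A` is the continuous functional calculus of `x ↦ x ^ t`, so
`(A ^ t)⁻¹ = A ^ (-t) = (A⁻¹) ^ t`. Writing `C = A^{-1/2} B A^{-1/2}`, one has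
`C⁻¹ = A^{1/2} B⁻¹ A^{1/2}`, and inverting `A^{1/2} C^t A^{1/2}` factor by factor gives
`A^{-1/2} (C⁻¹)^t A^{-1/2} = A⁻¹ #_t B⁻¹`.
-/

namespace Matrix

section FunctionalCalculus

variable {n 𝕜 : Type*} [Fintype n] [DecidableEq n] [RCLike 𝕜] {A : Matrix n n 𝕜}

lemma PosDef.pos_of_mem_spectrum (hA : A.PosDef) {x : ℝ} (hx : x ∈ spectrum ℝ A) : 0 < x := by
  obtain ⟨i, rfl⟩ := hA.1.spectrum_real_eq_range_eigenvalues ▸ hx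
  exact hA.eigenvalues_pos i

lemma IsHermitian.posDef_cfc (hA : A.IsHermitian) {f : ℝ → ℝ}
    (hf : ∀ i, 0 < f (hA.eigenvalues i)) : (cfc f A).PosDef := by
  rw [hA.cfc_eq, IsHermitian.cfc, Unitary.conjStarAlgAut_apply, star_eq_conjTranspose]
  refine (PosDef.diagonal fun i => ?_).mul_mul_conjTranspose_same
    (vecMul_injective_iff_isUnit.mpr Unitary.isUnit_coe)
  simpa using hf i

lemma PosDef.inv_eq_cfc (hA : A.PosDef) : A⁻¹ = cfc (·⁻¹ : ℝ → ℝ) A := by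
  refine inv_eq_right_inv ?_
  have hfin := A.finite_real_spectrum
  conv_lhs => enter [1]; rw [← cfc_id' ℝ A hA.1.isSelfAdjoint]
  rw [← cfc_mul _ _ A (hfin.continuousOn _) (hfin.continuousOn _),
    ← cfc_one ℝ A hA.1.isSelfAdjoint]
  exact cfc_congr fun x hx => mul_inv_cancel₀ (hA.pos_of_mem_spectrum hx).ne'

lemma PosDef.mul_mul_of_posDef {M N : Matrix n n 𝕜} (hM : M.PosDef) (hN : N.PosDef) :
    (N * M * N).PosDef := by
  simpa only [hN.1.eq] using
    hM.mul_mul_conjTranspose_same (vecMul_injective_iff_isUnit.mpr hN.isUnit)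

end FunctionalCalculus

end Matrix

section RealPower

variable {m : ℕ} {A : Matrix (Fin m) (Fin m) ℂ}

lemma mrpow_eq_cfc (hA : A.IsHermitian) (t : ℝ) : mrpow A t = cfc (· ^ t : ℝ → ℝ) A := by
  rw [mrpow, dif_pos hA, hA.cfc_eq, IsHermitian.cfc, Unitary.conjStarAlgAut_apply]
  rfl

lemma mrpow_posDef (hA : A.PosDef) (t : ℝ) : (mrpow A t).PosDef :=
  mrpow_eq_cfc hA.1 t ▸ hA.1.posDef_cfc fun i => Real.rpow_pos_of_pos (hA.eigenvalues_pos i) t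

lemma mrpow_zero (hA : A.IsHermitian) : mrpow A 0 = 1 := by
  simp only [mrpow_eq_cfc hA, Real.rpow_zero, cfc_const_one ℝ A]

lemma mrpow_add (hA : A.PosDef) (s t : ℝ) : mrpow A (s + t) = mrpow A s * mrpow A t := by
  have hfin := A.finite_real_spectrum
  rw [mrpow_eq_cfc hA.1, mrpow_eq_cfc hA.1, mrpow_eq_cfc hA.1,
    ← cfc_mul _ _ A (hfin.continuousOn _) (hfin.continuousOn _)]
  exact cfc_congr fun x hx => Real.rpow_add (hA.pos_of_mem_spectrum hx) s t

lemma mrpow_neg (hA : A.PosDef) (t : ℝ) : mrpow A (-t) = (mrpow A t)⁻¹ :=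
  (inv_eq_right_inv <| by rw [← mrpow_add hA, add_neg_cancel, mrpow_zero hA.1]).symm

lemma mrpow_nonsing_inv (hA : A.PosDef) (t : ℝ) : mrpow A⁻¹ t = mrpow A (-t) := by
  have hfin := A.finite_real_spectrum
  rw [mrpow_eq_cfc hA.inv.1, mrpow_eq_cfc hA.1, hA.inv_eq_cfc,
    ← cfc_comp' _ _ A ((hfin.image _).continuousOn _) (hfin.continuousOn _) hA.1.isSelfAdjoint]
  exact cfc_congr fun x hx => by
    rw [Real.inv_rpow (hA.pos_of_mem_spectrum hx).le, Real.rpow_neg (hA.pos_of_mem_spectrum hx).le]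

end RealPower

theorem geomMean_inv_general {m : ℕ} (A B : Matrix (Fin m) (Fin m) ℂ)
    (hA : A.PosDef) (hB : B.PosDef) (t : ℝ) :
    (geomMean t A B)⁻¹ = geomMean t A⁻¹ B⁻¹ := by
  unfold geomMean
  set C := mrpow A (-(1/2)) * B * mrpow A (-(1/2))
  have hC : C.PosDef := hB.mul_mul_of_posDef (mrpow_posDef hA _)
  have hC_inv : C⁻¹ = mrpow A (1/2) * B⁻¹ * mrpow A (1/2) := by
    rw [Matrix.mul_inv_rev, Matrix.mul_inv_rev, ← mrpow_neg hA, neg_neg, mul_assoc]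
  rw [mrpow_nonsing_inv hA, mrpow_nonsing_inv hA, neg_neg, ← hC_inv, mrpow_nonsing_inv hC,
    Matrix.mul_inv_rev, Matrix.mul_inv_rev, ← mrpow_neg hA, ← mrpow_neg hC, mul_assoc]

theorem geomMean_inv {m : ℕ} (A B : Matrix (Fin m) (Fin m) ℂ)
    (hA : A.PosDef) (hB : B.PosDef) (t : ℝ) (ht : t ∈ Set.Icc (0:ℝ) 1) :
    (geomMean t A B)⁻¹ = geomMean t A⁻¹ B⁻¹ :=
  geomMean_inv_general A B hA hB t
end

section
/- For any invertible matrix S and positive definite matrices A, B, one has S* (A #_t B) S = (S* A S) #_t (S* B S) for all t in [0,1]. -/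
open Matrix
open scoped ComplexOrder

/-!
Write `A = a²` with `a = A^{1/2}`. For any factorization `A = T Tᴴ`, the matrix `U = a⁻¹ T` is
unitary, and since the matrix power commutes with unitary conjugation,
`T (T⁻¹ B T⁻ᴴ)^t Tᴴ = a (a⁻¹ B a⁻¹)^t a = A #_t B`. Applied to the factorization
`Sᴴ A S = (Sᴴ a)(Sᴴ a)ᴴ`, whose inner matrix `(Sᴴ a)⁻¹ (Sᴴ B S) (Sᴴ a)⁻ᴴ` is again `a⁻¹ B a⁻¹`,
this gives the congruence invariance.
-/

namespace Matrix

variable {m : ℕ} {A : Matrix (Fin m) (Fin m) ℂ}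

lemma IsHermitian.mrpow_eq_cfc (hA : A.IsHermitian) (t : ℝ) :
    mrpow A t = cfc (fun x : ℝ => x ^ t) A := by
  rw [mrpow, dif_pos hA, hA.cfc_eq]
  rfl

lemma mrpow_of_not_isHermitian (hA : ¬A.IsHermitian) (t : ℝ) : mrpow A t = A :=
  dif_neg hA

lemma isHermitian_mrpow (hA : A.IsHermitian) (t : ℝ) : (mrpow A t).IsHermitian := by
  rw [hA.mrpow_eq_cfc]
  exact cfc_predicate _ A

lemma IsHermitian.mrpow_zero (hA : A.IsHermitian) : mrpow A 0 = 1 := by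
  simp only [hA.mrpow_eq_cfc, Real.rpow_zero, cfc_const_one ℝ A]

lemma IsHermitian.mrpow_one (hA : A.IsHermitian) : mrpow A 1 = A := by
  simp only [hA.mrpow_eq_cfc, Real.rpow_one, cfc_id' ℝ A]

lemma PosDef.mrpow_mul_mrpow (hA : A.PosDef) (s t : ℝ) :
    mrpow A s * mrpow A t = mrpow A (s + t) := by
  simp only [hA.1.mrpow_eq_cfc]
  rw [← cfc_mul _ _ A (A.finite_real_spectrum.continuousOn _)
    (A.finite_real_spectrum.continuousOn _)]
  refine cfc_congr fun x hx => (Real.rpow_add ?_ s t).symm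
  obtain ⟨i, rfl⟩ := hA.1.spectrum_real_eq_range_eigenvalues ▸ hx
  exact hA.eigenvalues_pos i

lemma PosDef.mrpow_neg_mul_mrpow (hA : A.PosDef) (s : ℝ) : mrpow A (-s) * mrpow A s = 1 := by
  rw [hA.mrpow_mul_mrpow, neg_add_cancel, hA.1.mrpow_zero]

lemma PosDef.mrpow_mul_mrpow_neg (hA : A.PosDef) (s : ℝ) : mrpow A s * mrpow A (-s) = 1 := by
  rw [hA.mrpow_mul_mrpow, add_neg_cancel, hA.1.mrpow_zero]

lemma PosDef.inv_mrpow (hA : A.PosDef) (s : ℝ) : (mrpow A s)⁻¹ = mrpow A (-s) :=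
  inv_eq_left_inv (hA.mrpow_neg_mul_mrpow s)

lemma PosDef.mrpow_half_mul_mrpow_half (hA : A.PosDef) : mrpow A (1/2) * mrpow A (1/2) = A := by
  rw [hA.mrpow_mul_mrpow, add_halves, hA.1.mrpow_one]

lemma mrpow_unitary_conj (u : unitary (Matrix (Fin m) (Fin m) ℂ)) (t : ℝ) :
    mrpow ((u : Matrix (Fin m) (Fin m) ℂ) * A * star (u : Matrix (Fin m) (Fin m) ℂ)) t =
      u * mrpow A t * star (u : Matrix (Fin m) (Fin m) ℂ) := by
  let φ := Unitary.conjStarAlgAut ℂ _ u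
  have hφ : Continuous φ := (continuous_const.matrix_mul continuous_id).matrix_mul continuous_const
  change mrpow (φ A) t = φ (mrpow A t)
  by_cases hA : A.IsHermitian
  · have hφA : (φ A).IsHermitian := (hA.isSelfAdjoint.map φ :)
    rw [hA.mrpow_eq_cfc, hφA.mrpow_eq_cfc]
    exact (StarAlgHomClass.map_cfc φ _ A (A.finite_real_spectrum.continuousOn _) hφ hA hφA).symm
  · have hφA : ¬(φ A).IsHermitian := fun h =>
      hA (by simpa using h.isSelfAdjoint.map φ.symm : IsSelfAdjoint A)
    rw [mrpow_of_not_isHermitian hA, mrpow_of_not_isHermitian hφA]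

lemma PosDef.geomMean_eq_of_mul_conjTranspose_eq (hA : A.PosDef) (B : Matrix (Fin m) (Fin m) ℂ)
    {T : Matrix (Fin m) (Fin m) ℂ} (hT : T * Tᴴ = A) (t : ℝ) :
    geomMean t A B = T * mrpow (T⁻¹ * B * T⁻¹ᴴ) t * Tᴴ := by
  set a := mrpow A (1/2)
  set a' := mrpow A (-(1/2))
  have haa' : a * a' = 1 := hA.mrpow_mul_mrpow_neg _
  have ha'a : a' * a = 1 := hA.mrpow_neg_mul_mrpow _
  have ha : aᴴ = a := (isHermitian_mrpow hA.1 _).eq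
  have ha' : a'ᴴ = a' := (isHermitian_mrpow hA.1 _).eq
  have hU : a' * T ∈ unitary (Matrix (Fin m) (Fin m) ℂ) := by
    rw [← unitaryGroup, mem_unitaryGroup_iff, star_eq_conjTranspose, conjTranspose_mul, ha']
    calc a' * T * (Tᴴ * a') = a' * (a * a) * a' := by
          rw [hA.mrpow_half_mul_mrpow_half, ← hT]; simp only [mul_assoc]
      _ = 1 := by rw [← mul_assoc, ha'a, one_mul, haa']
  have hTU : T = a * (a' * T) := by rw [← mul_assoc, haa', one_mul]
  generalize a' * T = U at hU hTU
  subst hTU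
  have hUinv : U⁻¹ = star U := inv_eq_left_inv (Unitary.star_mul_self_of_mem hU)
  have hconj := mrpow_unitary_conj (A := a' * B * a') (star ⟨U, hU⟩) t
  simp only [Unitary.coe_star, star_star] at hconj
  have hX : (a * U)⁻¹ * B * (a * U)⁻¹ᴴ = star U * (a' * B * a') * U := by
    rw [Matrix.mul_inv_rev, hUinv, inv_eq_left_inv ha'a, conjTranspose_mul, ha',
      ← star_eq_conjTranspose, star_star]
    simp only [mul_assoc]
  have hUU : U * star U = 1 := Unitary.mul_star_self_of_mem hU
  rw [hX, hconj, conjTranspose_mul, ← star_eq_conjTranspose U, ha]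
  calc geomMean t A B = a * mrpow (a' * B * a') t * a := rfl
    _ = a * U * (star U * mrpow (a' * B * a') t * U) * (star U * a) := by
      simp only [mul_assoc]
      rw [← mul_assoc U, hUU, one_mul, ← mul_assoc U, hUU, one_mul]

end Matrix

theorem geomMean_conj_general {m : ℕ} (A B S : Matrix (Fin m) (Fin m) ℂ)
    (hA : A.PosDef) (hS : IsUnit S)
    (t : ℝ) :
    Sᴴ * geomMean t A B * S = geomMean t (Sᴴ * A * S) (Sᴴ * B * S) := by
  have hSAS : (Sᴴ * A * S).PosDef := hA.conjTranspose_mul_mul_same (mulVec_injective_of_isUnit hS)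
  have ha : (mrpow A (1/2))ᴴ = mrpow A (1/2) := (isHermitian_mrpow hA.1 _).eq
  have ha' : (mrpow A (-(1/2)))ᴴ = mrpow A (-(1/2)) := (isHermitian_mrpow hA.1 _).eq
  have hSS : S * S⁻¹ = 1 := mul_nonsing_inv S (S.isUnit_iff_isUnit_det.mp hS)
  have hSS' : Sᴴ⁻¹ * Sᴴ = 1 := by
    rw [← conjTranspose_nonsing_inv, ← conjTranspose_mul, hSS, conjTranspose_one]
  have hT : Sᴴ * mrpow A (1/2) * (Sᴴ * mrpow A (1/2))ᴴ = Sᴴ * A * S := by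
    rw [conjTranspose_mul, conjTranspose_conjTranspose, ha, ← mul_assoc, mul_assoc Sᴴ,
      hA.mrpow_half_mul_mrpow_half]
  have hX : (Sᴴ * mrpow A (1/2))⁻¹ * (Sᴴ * B * S) * (Sᴴ * mrpow A (1/2))⁻¹ᴴ =
      mrpow A (-(1/2)) * B * mrpow A (-(1/2)) := by
    rw [Matrix.mul_inv_rev, hA.inv_mrpow, conjTranspose_mul, ha', conjTranspose_nonsing_inv,
      conjTranspose_conjTranspose]
    simp only [mul_assoc]
    rw [← mul_assoc Sᴴ⁻¹, hSS', one_mul, ← mul_assoc S, hSS, one_mul]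
  rw [hSAS.geomMean_eq_of_mul_conjTranspose_eq _ hT, hX, geomMean, conjTranspose_mul,
    conjTranspose_conjTranspose, ha]
  simp only [mul_assoc]

theorem geomMean_conj {m : ℕ} (A B S : Matrix (Fin m) (Fin m) ℂ)
    (hA : A.PosDef) (hB : B.PosDef) (hS : IsUnit S)
    (t : ℝ) (ht : t ∈ Set.Icc (0:ℝ) 1) :
    Sᴴ * geomMean t A B * S = geomMean t (Sᴴ * A * S) (Sᴴ * B * S) :=
  geomMean_conj_general A B S hA hS t
end

section
/- Let G be a graph with all loops and A(G), B(G) be G-partial matrices with 0 < B(G) < A(G) (i.e., B(G) and A(G)−B(G) are partial positive definite). Then the set of positive definite completions of A(G)−B(G) equals the intersection of { M − N : M ∈ p⁺[A(G)], N ∈ p⁺[B(G)] } with the cone of positive definite matrices, provided p⁺[B(G)] is nonempty. -/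
open Matrix
open scoped ComplexOrder

variable {n : ℕ}

/-- `M` is a completion of the `G`-partial matrix `A` (entries specified on edges `E`). -/
def IsCompletion (E : Fin n → Fin n → Prop) (A M : Matrix (Fin n) (Fin n) ℂ) : Prop :=
  ∀ i j, E i j → M i j = A i j

/-- The set of positive semidefinite completions of the `G`-partial matrix `A`. -/
def psdCompletions (E : Fin n → Fin n → Prop) (A : Matrix (Fin n) (Fin n) ℂ) :
    Set (Matrix (Fin n) (Fin n) ℂ) :=
  {M | M.PosSemidef ∧ IsCompletion E A M}

/-- The set of positive definite completions of the `G`-partial matrix `A`. -/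
def pdCompletions (E : Fin n → Fin n → Prop) (A : Matrix (Fin n) (Fin n) ℂ) :
    Set (Matrix (Fin n) (Fin n) ℂ) :=
  {M | M.PosDef ∧ IsCompletion E A M}

/-- A `G`-partial matrix is partial positive semidefinite if every fully specified
principal submatrix (i.e. indexed by a clique of `G`) is positive semidefinite. -/
def PartialPSD (E : Fin n → Fin n → Prop) (A : Matrix (Fin n) (Fin n) ℂ) : Prop :=
  ∀ C : Finset (Fin n), (∀ i ∈ C, ∀ j ∈ C, E i j) →
    Matrix.PosSemidef (A.submatrix (fun x : {i // i ∈ C} => (x : Fin n))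
      (fun x : {i // i ∈ C} => (x : Fin n)))

/-- A `G`-partial matrix is partial positive definite if every fully specified
principal submatrix (i.e. indexed by a clique of `G`) is positive definite. -/
def PartialPD (E : Fin n → Fin n → Prop) (A : Matrix (Fin n) (Fin n) ℂ) : Prop :=
  ∀ C : Finset (Fin n), (∀ i ∈ C, ∀ j ∈ C, E i j) →
    Matrix.PosDef (A.submatrix (fun x : {i // i ∈ C} => (x : Fin n))
      (fun x : {i // i ∈ C} => (x : Fin n)))

theorem pdCompletions_sub_eq
    (E : Fin n → Fin n → Prop) (hrefl : ∀ i, E i i) (hsymm : ∀ i j, E i j → E j i)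
    (A B : Matrix (Fin n) (Fin n) ℂ)
    (hB : PartialPD E B) (hAB : PartialPD E (A - B))
    (hne : (pdCompletions E B).Nonempty) :
    pdCompletions E (A - B) =
      {X | (∃ M ∈ pdCompletions E A, ∃ N ∈ pdCompletions E B, X = M - N) ∧ X.PosDef} := by
  obtain ⟨N₀, hN₀pd, hN₀c⟩ := hne
  ext X
  constructor
  · rintro ⟨hXpd, hXc⟩
    refine ⟨⟨X + N₀, ⟨hXpd.add hN₀pd, fun i j hij => ?_⟩, N₀, ⟨hN₀pd, hN₀c⟩, by abel⟩, hXpd⟩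
    have h1 := hXc i j hij
    have h2 := hN₀c i j hij
    simp only [Matrix.add_apply, Matrix.sub_apply] at *
    rw [h1, h2]; ring
  · rintro ⟨⟨M, ⟨hMpd, hMc⟩, N, ⟨hNpd, hNc⟩, rfl⟩, hXpd⟩
    refine ⟨hXpd, fun i j hij => ?_⟩
    simp only [Matrix.sub_apply]
    rw [hMc i j hij, hNc i j hij]
end
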